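/- Proposition 1: Let C be a nontrivial extended cyclic code (exponent set S_C ≠ {0}) of length 2^m, and let k_D denote the dimension of its cyclic derivative descendant D(C). Then k_D ≤ Σ_{i=0}^{deg(S_C)−1} binom(m, i). -/

import Mathlib

/-- Hamming weight of the `m`-bit binary expansion of `s`. -/
def wtm (m s : ℕ) : ℕ := ((Finset.range m).filter fun j => s.testBit j).card

/-- `Pset s`: the set of nonnegative integers whose binary expansion is
properly covered by that of `s`. -/
def Pset (s : ℕ) : Finset ℕ :=
  (Finset.range (s + 1)).filter fun k => k ||| s = s ∧ k ≠ s

/-- The cyclotomic coset `C_s` modulo `n = 2^m - 1`. -/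
def cycCoset (n m s : ℕ) : Finset ℕ := (Finset.range m).image fun j => 2 ^ j * s % n

/-- `cc S`: union of all cyclotomic cosets meeting `S`. -/
def ccSet (n m : ℕ) (S : Finset ℕ) : Finset ℕ := S.biUnion (cycCoset n m)

/-- `cr S`: the set of coset representatives (minimal elements of the cosets) of `S`. -/
def crSet (n m : ℕ) (S : Finset ℕ) : Finset ℕ :=
  (ccSet n m S).filter fun s => ∀ t ∈ cycCoset n m s, s ≤ t

/-- `S` is an exponent set: a set of residues mod `n` closed under doubling mod `n`. -/
def IsExpSet (n : ℕ) (S : Finset ℕ) : Prop :=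
  (∀ j ∈ S, j < n) ∧ ∀ j ∈ S, 2 * j % n ∈ S

/-- The extended cyclic code of length `2^m` with exponent set `S`. -/
def extCyclicCode {F : Type*} [Field F] (n : ℕ) (S : Finset ℕ) : Set (F → F) :=
  { c | ∃ A : ℕ → F, (∀ j ∈ S, A (2 * j % n) = A j ^ 2) ∧
      ∀ x : F, c x = ∑ j ∈ S, A j * x ^ j }

/-- The set of derivatives of the codewords of `C` in direction `β`. -/
def derivSet {F : Type*} [Field F] (β : F) (C : Set (F → F)) : Set (F → F) :=
  { d | ∃ c ∈ C, d = fun x => c (x + β) - c x }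

/-- Minimum Hamming distance (= minimum weight) of a code. -/
noncomputable def minDist {F : Type*} [Field F] [Fintype F] [DecidableEq F]
    (C : Set (F → F)) : ℕ :=
  sInf { w | ∃ c ∈ C, c ≠ (0 : F → F) ∧ hammingNorm c = w }

/-!
In characteristic 2, `(x + β) ^ j = ∏ i ∈ bits j, (x ^ 2 ^ i + β ^ 2 ^ i)`, so `(x + β) ^ j - x ^ j`
is a combination of monomials `x ^ k` whose exponent `k` is a proper binary submask of `j`, hence
of weight `< wt j`. The codewords of `C(S)` are exactly the functions `∑ k ∈ S, B k * x ^ k` with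
`f ^ 2 = f`, a property that `Δ_β` preserves; so `Δ_β C(S) ⊆ C(T)` for the exponent set `T` of all
weights `< deg S`, and minimality gives `D(C) ⊆ C(T)`. A polynomial function of degree `< 2 ^ m`
determines its coefficients, so testing with the indicator of a cyclotomic coset shows that
`C(S_D) ⊆ C(T)` forces `S_D ⊆ T`. Finally `T` has at most `∑ i < deg S, (m choose i)` elements.
-/

open Finset

section Weight

lemma wtm_eq_sum (m j : ℕ) : wtm m j = ∑ i ∈ range m, if j.testBit i then 1 else 0 :=
  card_filter _ _

lemma wtm_add_one (m j : ℕ) : wtm (m + 1) j = wtm m j + if j.testBit m then 1 else 0 := by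
  simp only [wtm_eq_sum, sum_range_succ]

lemma wtm_add_one_two_mul (m j : ℕ) : wtm (m + 1) (2 * j) = wtm m j := by
  rw [wtm_eq_sum, wtm_eq_sum, sum_range_succ']
  simp [Nat.testBit_add_one]

lemma wtm_add_one_two_mul_add_one (m j : ℕ) : wtm (m + 1) (2 * j + 1) = wtm m j + 1 := by
  rw [wtm_eq_sum, wtm_eq_sum, sum_range_succ']
  simp [Nat.testBit_add_one, show (2 * j + 1) / 2 = j by omega]

lemma wtm_two_pow_add (m r : ℕ) : wtm m (2 ^ m + r) = wtm m r := by
  simp only [wtm_eq_sum]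
  exact sum_congr rfl fun i hi => by rw [Nat.testBit_two_pow_add_gt (mem_range.1 hi)]

/-- Doubling modulo `2^m - 1` rotates the `m`-bit expansion cyclically. -/
lemma wtm_two_mul_mod {m j : ℕ} (hj : j < 2 ^ m - 1) :
    wtm m (2 * j % (2 ^ m - 1)) = wtm m j := by
  obtain _ | k := m
  · simp at hj
  have hpow : 2 ^ (k + 1) = 2 * 2 ^ k := by ring
  by_cases hjk : j < 2 ^ k
  · rw [Nat.mod_eq_of_lt (by omega), wtm_add_one_two_mul, wtm_add_one, Nat.testBit_lt_two_pow hjk]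
    rfl
  · obtain ⟨r, rfl⟩ : ∃ r, j = 2 ^ k + r := ⟨j - 2 ^ k, by omega⟩
    have hmod : 2 * (2 ^ k + r) % (2 ^ (k + 1) - 1) = 2 * r + 1 := by
      rw [show 2 * (2 ^ k + r) = 2 * r + 1 + (2 ^ (k + 1) - 1) by omega, Nat.add_mod_right,
        Nat.mod_eq_of_lt (by omega)]
    have hr : r.testBit k = false := Nat.testBit_lt_two_pow (by omega)
    rw [hmod, wtm_add_one_two_mul_add_one, wtm_add_one, wtm_two_pow_add,
      Nat.testBit_two_pow_add_eq, hr]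
    rfl

lemma toFinset_bitIndices_eq_filter {m k : ℕ} (hk : k < 2 ^ m) :
    k.bitIndices.toFinset = (range m).filter (k.testBit ·) := by
  ext i
  simp only [List.mem_toFinset, Nat.mem_bitIndices, mem_filter, mem_range]
  exact ⟨fun h => ⟨(Nat.pow_lt_pow_iff_right (by norm_num)).1
    ((Nat.ge_two_pow_of_testBit h).trans_lt hk), h⟩, And.right⟩

lemma wtm_eq_card_bitIndices {m k : ℕ} (hk : k < 2 ^ m) : wtm m k = #k.bitIndices.toFinset := by
  rw [toFinset_bitIndices_eq_filter hk, wtm]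

def lowWeightSet (m d : ℕ) : Finset ℕ := (range (2 ^ m - 1)).filter (wtm m · < d)

lemma isExpSet_lowWeightSet (m d : ℕ) : IsExpSet (2 ^ m - 1) (lowWeightSet m d) := by
  refine ⟨fun j hj => mem_range.1 (mem_filter.1 hj).1, fun j hj => ?_⟩
  obtain ⟨hjn, hjd⟩ := mem_filter.1 hj
  exact mem_filter.2 ⟨mem_range.2 (Nat.mod_lt _ (by simp at hjn; omega)),
    (wtm_two_mul_mod (mem_range.1 hjn)).trans_lt hjd⟩

lemma card_lowWeightSet_le (m d : ℕ) : #(lowWeightSet m d) ≤ ∑ i ∈ range d, m.choose i := by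
  rw [lowWeightSet, card_eq_sum_card_fiberwise (f := wtm m) (t := range d)
    fun k hk => mem_range.2 (mem_filter.1 hk).2]
  refine sum_le_sum fun i _ => (card_le_card_of_injOn (t := (range m).powersetCard i)
    (fun k => k.bitIndices.toFinset) (fun k hk => ?_) equivBitIndices.injective.injOn).trans_eq
    (by simp)
  obtain ⟨hkT, rfl⟩ := mem_filter.1 hk
  have hkm : k < 2 ^ m := by simp at hkT; omega
  simp only [mem_coe, mem_powersetCard, toFinset_bitIndices_eq_filter hkm]
  exact ⟨filter_subset _ _, rfl⟩

end Weight

section ExponentSet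

lemma two_mul_mod_injOn {n : ℕ} (hn : Odd n) : Set.InjOn (fun j => 2 * j % n) (Set.Iio n) :=
  fun _ ha _ hb h => Nat.ModEq.eq_of_lt_of_lt
    (Nat.ModEq.cancel_left_of_coprime (Nat.coprime_two_right.2 hn) h) ha hb

namespace IsExpSet

variable {n : ℕ} {S : Finset ℕ}

lemma injOn_two_mul_mod (hS : IsExpSet n S) (hn : Odd n) : Set.InjOn (fun j => 2 * j % n) S :=
  (two_mul_mod_injOn hn).mono fun j hj => hS.1 j hj

lemma image_two_mul_mod (hS : IsExpSet n S) (hn : Odd n) : S.image (fun j => 2 * j % n) = S :=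
  eq_of_subset_of_card_le (image_subset_iff.2 hS.2)
    (card_image_of_injOn (hS.injOn_two_mul_mod hn)).ge

lemma sum_comp_two_mul_mod {M : Type*} [AddCommMonoid M] (hS : IsExpSet n S) (hn : Odd n)
    (f : ℕ → M) : ∑ j ∈ S, f (2 * j % n) = ∑ j ∈ S, f j := by
  conv_rhs => rw [← hS.image_two_mul_mod hn]
  exact (sum_image (hS.injOn_two_mul_mod hn)).symm

end IsExpSet

lemma two_pow_modEq_two_pow_mod (m i : ℕ) : 2 ^ i ≡ 2 ^ (i % m) [MOD 2 ^ m - 1] := by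
  conv_lhs => rw [← Nat.div_add_mod i m, pow_add, pow_mul]
  simpa using ((Nat.modEq_sub Nat.one_le_two_pow).pow (i / m)).mul_right (2 ^ (i % m))

lemma two_mul_mem_cycCoset {m s t : ℕ} (ht : t ∈ cycCoset (2 ^ m - 1) m s) :
    2 * t % (2 ^ m - 1) ∈ cycCoset (2 ^ m - 1) m s := by
  obtain ⟨i, hi, rfl⟩ := mem_image.1 ht
  have hm : 0 < m := Nat.zero_lt_of_lt (mem_range.1 hi)
  refine mem_image.2 ⟨(i + 1) % m, mem_range.2 (Nat.mod_lt _ hm), ?_⟩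
  rw [Nat.mul_mod_mod, ← mul_assoc, ← pow_succ']
  exact ((two_pow_modEq_two_pow_mod m (i + 1)).mul_right s).symm

lemma isExpSet_cycCoset (m s : ℕ) : IsExpSet (2 ^ m - 1) (cycCoset (2 ^ m - 1) m s) := by
  refine ⟨fun t ht => ?_, fun t ht => two_mul_mem_cycCoset ht⟩
  obtain ⟨i, hi, rfl⟩ := mem_image.1 ht
  have hm : 0 < m := Nat.zero_lt_of_lt (mem_range.1 hi)
  exact Nat.mod_lt _ (by have := Nat.one_lt_two_pow hm.ne'; omega)

lemma mem_cycCoset_self {m s : ℕ} (hs : s < 2 ^ m - 1) : s ∈ cycCoset (2 ^ m - 1) m s := by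
  have hm : m ≠ 0 := by rintro rfl; simp at hs
  exact mem_image.2 ⟨0, mem_range.2 (Nat.pos_of_ne_zero hm), by simp [Nat.mod_eq_of_lt hs]⟩

lemma IsExpSet.cycCoset_subset {m : ℕ} {S : Finset ℕ} (hS : IsExpSet (2 ^ m - 1) S) {s : ℕ}
    (hs : s ∈ S) : cycCoset (2 ^ m - 1) m s ⊆ S := by
  intro t ht
  obtain ⟨i, -, rfl⟩ := mem_image.1 ht
  clear ht
  induction i with
  | zero => simpa [Nat.mod_eq_of_lt (hS.1 s hs)] using hs
  | succ i ih => simpa [pow_succ', mul_assoc, Nat.mul_mod_mod] using hS.2 _ ih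

end ExponentSet

def monomialSpan (R : Type*) [CommSemiring R] (T : Finset ℕ) : Submodule R (R → R) where
  carrier := {f | ∃ B : ℕ → R, ∀ x, f x = ∑ k ∈ T, B k * x ^ k}
  add_mem' := by
    rintro f g ⟨A, hA⟩ ⟨B, hB⟩
    exact ⟨A + B, fun x => by simp [hA, hB, add_mul, sum_add_distrib]⟩
  zero_mem' := ⟨0, by simp⟩
  smul_mem' := by
    rintro a f ⟨B, hB⟩
    exact ⟨a • B, fun x => by simp [hB, mul_sum, mul_assoc]⟩

section MonomialSpan

variable {R : Type*} [CommSemiring R] {S T : Finset ℕ}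

lemma pow_mem_monomialSpan {k : ℕ} (hk : k ∈ T) : (fun x : R => x ^ k) ∈ monomialSpan R T :=
  ⟨Pi.single k 1, fun x => by simp [Pi.single_apply, hk]⟩

lemma monomialSpan_mono (h : S ⊆ T) : monomialSpan R S ≤ monomialSpan R T := by
  rintro f ⟨B, hB⟩
  refine ⟨fun k => if k ∈ S then B k else 0, fun x => ?_⟩
  rw [hB, ← sum_subset h fun k _ hk => by simp [hk]]
  exact sum_congr rfl fun k hk => by simp [hk]

lemma extCyclicCode_subset_monomialSpan {F : Type*} [Field F] {n : ℕ} :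
    extCyclicCode n S ⊆ (monomialSpan F S : Set (F → F)) :=
  fun _ ⟨A, _, hA⟩ => ⟨A, hA⟩

end MonomialSpan

section FiniteField

open Polynomial

variable {F : Type*} [Field F] [Fintype F]

lemma eq_zero_of_forall_sum_mul_pow_eq_zero {ι : Type*} {s : Finset ι} {e : ι → ℕ}
    (he : Set.InjOn e s) (hlt : ∀ i ∈ s, e i < Fintype.card F) {g : ι → F}
    (h : ∀ x, ∑ i ∈ s, g i * x ^ e i = 0) {i : ι} (hi : i ∈ s) : g i = 0 := by
  classical
  set p : F[X] := ∑ i ∈ s, C (g i) * X ^ e i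
  have hdeg : p.natDegree < #(univ : Finset F) := by
    refine (natDegree_sum_le_of_forall_le s _ (n := Fintype.card F - 1) fun i hi => ?_).trans_lt
      (by simp [Fintype.card_pos])
    exact natDegree_C_mul_X_pow_le _ _ |>.trans (by have := hlt i hi; omega)
  have hp : p = 0 := eq_zero_of_natDegree_lt_card_of_eval_eq_zero' p univ
    (fun x _ => by simp [p, eval_finsetSum, h]) hdeg
  have := congrArg (coeff · (e i)) hp
  simp only [p, finsetSum_coeff, coeff_C_mul_X_pow, coeff_zero] at this
  rwa [sum_eq_single i (fun j hj hji => if_neg fun hij => hji (he hj hi hij.symm))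
    (fun h => absurd hi h), if_pos rfl] at this

end FiniteField

section CharTwo

variable {F : Type*} [Field F] [Fintype F] [CharP F 2] {n : ℕ}

lemma odd_of_card_eq_add_one (hq : Fintype.card F = n + 1) : Odd n := by
  obtain ⟨k, -, hk⟩ := FiniteField.card F 2
  rw [← Nat.not_even_iff_odd, ← Nat.even_add_one, ← hq, hk]
  exact (Nat.even_pow' k.ne_zero).2 even_two

lemma pow_two_mul_mod (hq : Fintype.card F = n + 1) (x : F) {j : ℕ} (hj : j < n) :
    x ^ (2 * j % n) = x ^ (2 * j) := by
  rcases lt_or_ge (2 * j) n with h | h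
  · rw [Nat.mod_eq_of_lt h]
  obtain ⟨t, rfl⟩ := odd_of_card_eq_add_one hq
  -- oddness of `n` keeps `2 * j % n` nonzero, which matters at `x = 0`
  obtain ⟨a, ha⟩ : ∃ a, 2 * j = a + 1 + (2 * t + 1) := ⟨2 * j - (2 * t + 1) - 1, by omega⟩
  rw [ha, Nat.add_mod_right, Nat.mod_eq_of_lt (by omega),
    show a + 1 + (2 * t + 1) = a + (2 * t + 1 + 1) by ring, ← hq,
    pow_add x a (Fintype.card F), FiniteField.pow_card, pow_succ]

lemma sum_mul_pow_sq (hq : Fintype.card F = n + 1) {S : Finset ℕ} (hS : ∀ j ∈ S, j < n)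
    (A : ℕ → F) (x : F) :
    (∑ j ∈ S, A j * x ^ j) ^ 2 = ∑ j ∈ S, A j ^ 2 * x ^ (2 * j % n) := by
  rw [sum_pow_char]
  exact sum_congr rfl fun j hj => by rw [mul_pow, pow_two_mul_mod hq x (hS j hj), ← pow_mul']

lemma sq_eq_self_of_mem_extCyclicCode (hq : Fintype.card F = n + 1) {S : Finset ℕ}
    (hS : IsExpSet n S) {c : F → F} (hc : c ∈ extCyclicCode n S) (x : F) : c x ^ 2 = c x := by
  obtain ⟨A, hA, hcA⟩ := hc
  calc c x ^ 2 = ∑ j ∈ S, A (2 * j % n) * x ^ (2 * j % n) := by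
        rw [hcA, sum_mul_pow_sq hq hS.1]
        exact sum_congr rfl fun j hj => by rw [hA j hj]
    _ = c x := by rw [hS.sum_comp_two_mul_mod (odd_of_card_eq_add_one hq) fun k => A k * x ^ k, hcA]

lemma mem_extCyclicCode_of_sq_eq_self (hq : Fintype.card F = n + 1) {T : Finset ℕ}
    (hT : IsExpSet n T) {f : F → F} (hf : f ∈ monomialSpan F T) (hsq : ∀ x, f x ^ 2 = f x) :
    f ∈ extCyclicCode n T := by
  obtain ⟨B, hB⟩ := hf
  have hn := odd_of_card_eq_add_one hq
  refine ⟨B, fun k hk => ?_, hB⟩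
  have hcoeff : ∀ x : F, ∑ k ∈ T, (B k ^ 2 - B (2 * k % n)) * x ^ (2 * k % n) = 0 := fun x => by
    have h := hsq x
    rw [hB, sum_mul_pow_sq hq hT.1, ← hT.sum_comp_two_mul_mod hn fun k => B k * x ^ k] at h
    simp [sub_mul, h]
  exact (sub_eq_zero.1 (eq_zero_of_forall_sum_mul_pow_eq_zero (hT.injOn_two_mul_mod hn)
    (fun k hk => by have := hT.1 _ (hT.2 k hk); omega) hcoeff hk)).symm

lemma extCyclicCode_mono (hq : Fintype.card F = n + 1) {S T : Finset ℕ} (hS : IsExpSet n S)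
    (hT : IsExpSet n T) (h : S ⊆ T) : extCyclicCode n S ⊆ (extCyclicCode n T : Set (F → F)) :=
  fun _ hc => mem_extCyclicCode_of_sq_eq_self hq hT
    (monomialSpan_mono h (extCyclicCode_subset_monomialSpan hc))
    (sq_eq_self_of_mem_extCyclicCode hq hS hc)

end CharTwo

lemma extCyclicCode_subset_extCyclicCode_iff {F : Type*} [Field F] [Fintype F] {m : ℕ}
    (hF : Fintype.card F = 2 ^ m) {S T : Finset ℕ} (hS : IsExpSet (2 ^ m - 1) S)
    (hT : IsExpSet (2 ^ m - 1) T) :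
    extCyclicCode (2 ^ m - 1) S ⊆ (extCyclicCode (2 ^ m - 1) T : Set (F → F)) ↔ S ⊆ T := by
  have := charP_of_card_eq_prime_pow hF
  have hq : Fintype.card F = 2 ^ m - 1 + 1 := by rw [hF, Nat.sub_add_cancel Nat.one_le_two_pow]
  refine ⟨fun h j hj => ?_, extCyclicCode_mono hq hS hT⟩
  set K := cycCoset (2 ^ m - 1) m j
  have hjK : j ∈ K := mem_cycCoset_self (hS.1 j hj)
  have hK : (fun x : F => ∑ t ∈ K, x ^ t) ∈ extCyclicCode (2 ^ m - 1) K := ⟨1, by simp, by simp⟩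
  obtain ⟨B, -, hB⟩ :=
    h (extCyclicCode_mono hq (isExpSet_cycCoset m j) hS (hS.cycCoset_subset hj) hK)
  by_contra hjT
  have hsum : ∀ x : F,
      ∑ t ∈ K ∪ T, ((if t ∈ K then 1 else 0) - if t ∈ T then B t else 0) * x ^ t = 0 := fun x => by
    simp [sub_mul, ite_mul, sum_sub_distrib, sum_ite_mem, hB x]
  have hlt : ∀ t ∈ K ∪ T, t < Fintype.card F := fun t ht => by
    rw [hq]
    exact Nat.lt_succ_of_lt ((mem_union.1 ht).elim ((isExpSet_cycCoset m j).1 t) (hT.1 t))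
  simpa [hjK, hjT] using
    eq_zero_of_forall_sum_mul_pow_eq_zero (Set.injOn_id _) hlt hsum (mem_union_left T hjK)

lemma add_pow_eq_sum_powerset_bitIndices {R : Type*} [CommSemiring R] [CharP R 2] (x y : R)
    (j : ℕ) : (x + y) ^ j = ∑ U ∈ j.bitIndices.toFinset.powerset,
      x ^ (∑ i ∈ U, 2 ^ i) * y ^ (∑ i ∈ j.bitIndices.toFinset \ U, 2 ^ i) := by
  conv_lhs => rw [← sum_toFinset_bitIndices_two_pow j, ← prod_pow_eq_pow_sum]
  simp only [add_pow_char_pow, prod_add, prod_pow_eq_pow_sum]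

lemma add_pow_sub_pow_mem_monomialSpan {R : Type*} [CommRing R] [CharP R 2] (β : R)
    {m d j : ℕ} (hj : j < 2 ^ m - 1) (hjd : wtm m j ≤ d) :
    (fun x : R => (x + β) ^ j - x ^ j) ∈ monomialSpan R (lowWeightSet m d) := by
  set J := j.bitIndices.toFinset
  have hexp : (fun x : R => (x + β) ^ j - x ^ j) =
      ∑ U ∈ J.powerset.erase J, β ^ (∑ i ∈ J \ U, 2 ^ i) • fun x : R => x ^ (∑ i ∈ U, 2 ^ i) := by
    funext x
    rw [add_pow_eq_sum_powerset_bitIndices, ← add_sum_erase _ _ (mem_powerset_self J)]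
    simp [J, mul_comm]
  rw [hexp]
  refine sum_mem fun U hU => Submodule.smul_mem _ _ (pow_mem_monomialSpan ?_)
  have hUJ : U ⊂ J := (mem_powerset.1 (mem_of_mem_erase hU)).ssubset_of_ne (ne_of_mem_erase hU)
  have hlt : ∑ i ∈ U, 2 ^ i < j := by
    obtain ⟨i, hiJ, hiU⟩ := exists_of_ssubset hUJ
    conv_rhs => rw [← sum_toFinset_bitIndices_two_pow j]
    exact sum_lt_sum_of_subset hUJ.subset hiJ hiU (by positivity) fun _ _ _ => by positivity
  refine mem_filter.2 ⟨mem_range.2 (hlt.trans hj), ?_⟩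
  rw [wtm_eq_card_bitIndices (by omega), toFinset_bitIndices_sum_two_pow]
  calc #U < #J := card_lt_card hUJ
    _ = wtm m j := (wtm_eq_card_bitIndices (by omega)).symm
    _ ≤ d := hjd

lemma derivative_mem_extCyclicCode {F : Type*} [Field F] [Fintype F] {m : ℕ}
    (hF : Fintype.card F = 2 ^ m) {S : Finset ℕ} (hS : IsExpSet (2 ^ m - 1) S) {c : F → F}
    (hc : c ∈ extCyclicCode (2 ^ m - 1) S) (β : F) :
    (fun x => c (x + β) - c x) ∈ extCyclicCode (2 ^ m - 1) (lowWeightSet m (S.sup (wtm m))) := by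
  have := charP_of_card_eq_prime_pow hF
  have hq : Fintype.card F = 2 ^ m - 1 + 1 := by rw [hF, Nat.sub_add_cancel Nat.one_le_two_pow]
  refine mem_extCyclicCode_of_sq_eq_self hq (isExpSet_lowWeightSet _ _) ?_ fun x => ?_
  · obtain ⟨A, -, hA⟩ := hc
    have hsum : (fun x => c (x + β) - c x) = ∑ j ∈ S, A j • fun x : F => (x + β) ^ j - x ^ j := by
      funext x
      simp [hA, mul_sub, sum_sub_distrib]
    rw [hsum]
    exact sum_mem fun j hj => Submodule.smul_mem _ _
      (add_pow_sub_pow_mem_monomialSpan β (hS.1 j hj) (le_sup hj))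
  · rw [sub_pow_char, sq_eq_self_of_mem_extCyclicCode hq hS hc,
      sq_eq_self_of_mem_extCyclicCode hq hS hc]

theorem dimension_of_cyclicDD_general (m : ℕ)
    (n : ℕ) (hn : n = 2 ^ m - 1)
    {F : Type*} [Field F] [Fintype F] (hF : Fintype.card F = 2 ^ m)
    (S : Finset ℕ) (hS : IsExpSet n S)
    (SD : Finset ℕ) (hSD : IsExpSet n SD)
    (hmin : ∀ β : F, β ≠ 0 → ∀ S' : Finset ℕ, IsExpSet n S' →
      derivSet β (extCyclicCode n S) ⊆ (extCyclicCode n S' : Set (F → F)) →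
      (extCyclicCode n SD : Set (F → F)) ⊆ extCyclicCode n S') :
    SD.card ≤ ∑ i ∈ Finset.range (S.sup (wtm m)), m.choose i := by
  subst hn
  obtain ⟨β, hβ⟩ := exists_ne (0 : F)
  have hT := isExpSet_lowWeightSet m (S.sup (wtm m))
  have hDT := hmin β hβ _ hT (by
    rintro _ ⟨c, hc, rfl⟩
    exact derivative_mem_extCyclicCode hF hS hc β)
  calc #SD ≤ #(lowWeightSet m (S.sup (wtm m))) :=
        card_le_card ((extCyclicCode_subset_extCyclicCode_iff hF hSD hT).1 hDT)
    _ ≤ _ := card_lowWeightSet_le _ _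

/-- Proposition 1: let `C` be a nontrivial extended cyclic code (exponent set
`S_C ≠ {0}`) of length `2^m`, and let `k_D` be the dimension of its cyclic
derivative descendant `D(C)` (the smallest extended cyclic code containing the
derivatives of the codewords of `C`, in any nonzero direction); the dimension of
an extended cyclic code equals the size of its exponent set.  Then
`k_D ≤ ∑_{i=0}^{deg(S_C) - 1} binom(m, i)`. -/
theorem dimension_of_cyclicDD (m : ℕ) (hm : 0 < m)
    (n : ℕ) (hn : n = 2 ^ m - 1)
    {F : Type*} [Field F] [Fintype F] (hF : Fintype.card F = 2 ^ m)
    (S : Finset ℕ) (hS : IsExpSet n S) (hnt : S ≠ {0})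
    (SD : Finset ℕ) (hSD : IsExpSet n SD)
    (hcont : ∀ β : F, β ≠ 0 →
      derivSet β (extCyclicCode n S) ⊆ (extCyclicCode n SD : Set (F → F)))
    (hmin : ∀ β : F, β ≠ 0 → ∀ S' : Finset ℕ, IsExpSet n S' →
      derivSet β (extCyclicCode n S) ⊆ (extCyclicCode n S' : Set (F → F)) →
      (extCyclicCode n SD : Set (F → F)) ⊆ extCyclicCode n S') :
    SD.card ≤ ∑ i ∈ Finset.range (S.sup (wtm m)), m.choose i :=
  dimension_of_cyclicDD_general m n hn hF S hS SD hSD hmin
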